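/- arXiv:1505.01893 — 3 statements merged into one kernel-verified Lean document; each statement's English description precedes it below -/
import Mathlib

section
/- Let P ⊆ Q ⊆ ℝ^{k-1} be polytopes with vertices of P being v₁,…,v_m and Q defined by affine-linear inequalities f₁ ≥ 0, …, f_n ≥ 0. Define the slack matrix A ∈ ℝ^{n×m} by A_{ji} = f_j(v_i). If there exists a simplex Δ with k vertices satisfying P ⊆ Δ ⊆ Q, then A admits a nonnegative factorization A = BC with B ∈ ℝ^{n×k}, C ∈ ℝ^{k×m} nonnegative. -/
/-!
Every vertex `vᵢ` of `P` lies in the simplex, so it is a convex combination `vᵢ = ∑ₗ cₗᵢ dₗ`.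
Applying the affine function `fⱼ` gives `fⱼ(vᵢ) = ∑ₗ fⱼ(dₗ) cₗᵢ`, i.e. `A = BC` with
`Bⱼₗ = fⱼ(dₗ) ≥ 0` (as `dₗ ∈ Δ ⊆ Q`) and `Cₗᵢ = cₗᵢ ≥ 0`.
-/

open Finset Set

theorem AffineMap.apply_affineCombination_eq_sum {R E ι : Type*} [Ring R] [AddCommGroup E]
    [Module R E] (f : E →ᵃ[R] R) (s : Finset ι) (p : ι → E) {w : ι → R}
    (hw : ∑ i ∈ s, w i = 1) :
    f (s.affineCombination R p w) = ∑ i ∈ s, w i * f (p i) := by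
  rw [s.map_affineCombination p w hw, s.affineCombination_eq_linear_combination _ w hw]
  rfl

variable {R E ι κ α : Type*} [Field R] [LinearOrder R] [IsStrictOrderedRing R]
  [AddCommGroup E] [Module R E]

theorem exists_weights_of_mem_convexHull_range [Fintype ι] {p : ι → E} {x : E}
    (hx : x ∈ convexHull R (range p)) :
    ∃ w : ι → R, (∀ i, 0 ≤ w i) ∧ ∑ i, w i = 1 ∧ univ.affineCombination R p w = x := by
  classical
  rw [convexHull_range_eq_exists_affineCombination] at hx
  obtain ⟨s, w, hw₀, hw₁, rfl⟩ := hx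
  exact ⟨(s : Set ι).indicator w, Set.indicator_nonneg hw₀,
    (sum_indicator_subset w s.subset_univ).trans hw₁,
    (affineCombination_indicator_subset w p s.subset_univ).symm⟩

theorem exists_nonneg_factorization_of_mem_convexHull [Fintype κ] (v : ι → E) (p : κ → E)
    (f : α → E →ᵃ[R] R) (hv : ∀ i, v i ∈ convexHull R (range p)) (hf : ∀ j l, 0 ≤ f j (p l)) :
    ∃ (B : Matrix α κ R) (C : Matrix κ ι R), (∀ j l, 0 ≤ B j l) ∧ (∀ l i, 0 ≤ C l i) ∧
      Matrix.of (fun j i => f j (v i)) = B * C := by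
  choose w hw₀ hw₁ hwv using fun i => exists_weights_of_mem_convexHull_range (hv i)
  refine ⟨Matrix.of fun j l => f j (p l), Matrix.of fun l i => w i l, hf,
    fun l i => hw₀ i l, ?_⟩
  ext j i
  simp only [Matrix.of_apply, Matrix.mul_apply, ← hwv i,
    f j |>.apply_affineCombination_eq_sum _ _ (hw₁ i), mul_comm]

/-- If the polytope `P = conv{v₁,…,v_m}` is contained in a simplex `Δ = conv{d₁,…,d_k}`
(`k = d+1` vertices in `ℝ^d`), which is contained in `Q = {x | ∀ j, f_j x ≥ 0}` for affine
functions `f_j`, then the slack matrix `A`, `A j i = f j (v i)`, admits a nonnegative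
factorization `A = B * C` with inner dimension `k = d+1`. -/
theorem stmt3 {d m n : ℕ} (v : Fin m → (Fin d → ℝ))
    (f : Fin n → ((Fin d → ℝ) →ᵃ[ℝ] ℝ))
    (dpts : Fin (d + 1) → (Fin d → ℝ))
    (Q : Set (Fin d → ℝ)) (hQ : Q = {x | ∀ j, 0 ≤ f j x})
    (hPΔ : convexHull ℝ (Set.range v) ⊆ convexHull ℝ (Set.range dpts))
    (hΔQ : convexHull ℝ (Set.range dpts) ⊆ Q)
    (A : Matrix (Fin n) (Fin m) ℝ) (hA : ∀ j i, A j i = f j (v i)) :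
    ∃ (B : Matrix (Fin n) (Fin (d + 1)) ℝ) (C : Matrix (Fin (d + 1)) (Fin m) ℝ),
      (∀ j l, 0 ≤ B j l) ∧ (∀ l i, 0 ≤ C l i) ∧ A = B * C := by
  subst hQ
  obtain rfl : A = Matrix.of fun j i => f j (v i) := Matrix.ext hA
  exact exists_nonneg_factorization_of_mem_convexHull v dpts f
    (fun i => hPΔ (subset_convexHull ℝ _ (mem_range_self i)))
    (fun j l => hΔQ (subset_convexHull ℝ _ (mem_range_self l)) j)
end

section
/- If P ⊆ Q ⊆ ℝ^{k-1} are polytopes with dim P = k-1, vertices of P in F^{k-1} and facet inequalities of Q with coefficients in F for a subfield F ⊆ ℝ, and if every simplex Δ with P ⊆ Δ ⊆ Q has at least one vertex outside F^{k-1}, while some such simplex exists over ℝ, then the slack matrix A of the pair (P,Q) satisfies rank₊(A, F) > k = rank₊(A, ℝ). -/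
/-!
Homogenize the facet inequalities of `Q` to the linear map `L (t, y) = (t f_j(0) + f_j.linear y)_j`
on `ℝ × ℝᵈ`, so that the columns of the slack matrix are `L (1, v_i)`. Since `Q` is bounded and has
two points, a vector `(t, y) ≠ 0` with `L (t, y) ≥ 0` has `t > 0`; in particular `L` is injective,
and since `P` is full-dimensional the columns of `A` span the `(d + 1)`-dimensional range of `L`.
Hence a nonnegative factorization `A = ∑_{l < k} b_l c_lᵀ` with `k ≤ d + 1` has `k = d + 1` and
`b_l = L (t_l, y_l)` with `t_l > 0`: the points `p_l = y_l / t_l` lie in `Q`, and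
`v_i = ∑_l c_{li} t_l p_l` is a convex combination, so the `p_l` span a simplex between `P` and `Q`.
When the factors are over `F`, so are the `p_l`, because an injective linear map defined over `F`
has `F`-rational preimages of `F`-rational vectors. Conversely, a real simplex between `P` and `Q`
factors `A` through the barycentric coordinates of the `v_i`.
-/

/-- The nonnegative rank of a real matrix `A` over a subfield `F` of `ℝ`:
the smallest `k` such that `A` is a sum of `k` rank-one matrices, each with
nonnegative entries belonging to `F`. -/
noncomputable def nonnegRank {m n : ℕ} (F : Subfield ℝ) (A : Matrix (Fin m) (Fin n) ℝ) : ℕ :=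
  sInf {k | ∃ b : Fin k → Fin m → ℝ, ∃ c : Fin k → Fin n → ℝ,
    (∀ l i, 0 ≤ b l i ∧ b l i ∈ F) ∧ (∀ l j, 0 ≤ c l j ∧ c l j ∈ F) ∧
    A = ∑ l, Matrix.vecMulVec (b l) (c l)}

open Finset Function Set Bornology Module Submodule Matrix

namespace Subfield

variable {K : Type*} [Field K] (S : Subfield K) {ι κ : Type*} [Fintype ι]

theorem mulVec_mem {M : Matrix κ ι K} (hM : ∀ j i, M j i ∈ S) {x : ι → K} (hx : ∀ i, x i ∈ S)
    (j : κ) : (M *ᵥ x) j ∈ S :=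
  S.sum_mem fun i _ => S.mul_mem (hM j i) (hx i)

theorem inv_apply_mem [DecidableEq ι] {G : Matrix ι ι K} (hG : ∀ i i', G i i' ∈ S) (i i' : ι) :
    G⁻¹ i i' ∈ S := by
  let GS : Matrix ι ι S := .of fun i i' => ⟨G i i', hG i i'⟩
  have hGS : G = S.subtype.mapMatrix GS := rfl
  rw [Matrix.inv_def, Ring.inverse_eq_inv', hGS, ← RingHom.map_det, ← RingHom.map_adjugate]
  exact S.mul_mem (S.inv_mem (GS.det).2) (GS.adjugate i i').2

variable [LinearOrder K] [IsStrictOrderedRing K] [Fintype κ] [DecidableEq ι]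

/-- Solve `L x = z` as `x = (Mᵀ M)⁻¹ Mᵀ z`, where `M` is the matrix of `L`; over an ordered field
`Mᵀ M` is invertible as soon as `L` is injective. -/
theorem apply_mem_of_injective {L : (ι → K) →ₗ[K] κ → K} (hL : Injective L)
    (hLS : ∀ i j, L (Pi.single i 1) j ∈ S) {x : ι → K} (hx : ∀ j, L x j ∈ S) (i : ι) :
    x i ∈ S := by
  obtain ⟨M, rfl⟩ : ∃ M : Matrix κ ι K, L = M.mulVecLin :=
    ⟨LinearMap.toMatrix' L, by rw [← toLin'_apply', toLin'_toMatrix']⟩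
  have hdet : IsUnit (Mᵀ * M).det := by
    rw [← isUnit_iff_isUnit_det, ← mulVec_injective_iff_isUnit, ← coe_mulVecLin,
      ← LinearMap.ker_eq_bot, ker_mulVecLin_transpose_mul_self, LinearMap.ker_eq_bot]
    exact hL
  have hx' : x = (Mᵀ * M)⁻¹ *ᵥ (Mᵀ *ᵥ (M *ᵥ x)) := by
    rw [mulVec_mulVec, mulVec_mulVec, Matrix.mul_assoc, nonsing_inv_mul _ hdet, one_mulVec]
  have hM : ∀ j i, M j i ∈ S := fun j i => by simpa using hLS i j
  have hMt : ∀ i j, Mᵀ i j ∈ S := fun i j => hM j i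
  have hG : ∀ i i', (Mᵀ * M) i i' ∈ S := fun i i' =>
    S.sum_mem fun j _ => S.mul_mem (hMt i j) (hM j i')
  rw [hx']
  exact S.mulVec_mem (S.inv_apply_mem hG) (S.mulVec_mem hMt hx) i

end Subfield

theorem Matrix.eq_sum_vecMulVec_iff {R : Type*} [NonUnitalNonAssocSemiring R] {m n k : Type*}
    [Fintype k] {A : Matrix m n R} {b : k → m → R} {c : k → n → R} :
    A = ∑ l, vecMulVec (b l) (c l) ↔ ∀ j i, A j i = ∑ l, b l j * c l i := by
  simp only [← Matrix.ext_iff, Matrix.sum_apply, vecMulVec_apply]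

section LinearAlgebra

variable {K V : Type*} [Field K] [AddCommGroup V] [Module K V] {ι : Type*}

theorem span_range_one_prod_eq_top [Fintype ι] {v : ι → V} (hv : affineSpan K (range v) = ⊤) :
    span K (range fun i => ((1 : K), v i)) = ⊤ := by
  have hone : ∀ x : V, ((1 : K), x) ∈ span K (range fun i => ((1 : K), v i)) := by
    intro x
    obtain ⟨w, hw, rfl⟩ :=
      eq_affineCombination_of_mem_affineSpan_of_fintype (hv ▸ AffineSubspace.mem_top K V x)
    rw [Finset.univ.affineCombination_eq_linear_combination v w hw]
    have : ((1 : K), ∑ i, w i • v i) = ∑ i, w i • ((1 : K), v i) := by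
      ext <;> simp [hw, Prod.fst_sum, Prod.snd_sum]
    rw [this]
    exact sum_mem fun i _ => smul_mem _ _ (subset_span ⟨i, rfl⟩)
  refine eq_top_iff.2 fun z _ => ?_
  have : z = (z.1 - 1) • ((1 : K), (0 : V)) + (1, z.2) := by ext <;> simp
  rw [this]
  exact add_mem (smul_mem _ _ (hone 0)) (hone z.2)

theorem linearIndependent_and_span_eq_of_le {W : Type*} [AddCommGroup W] [Module K W]
    {a : ι → W} {k : ℕ} {b : Fin k → W} (hab : span K (range a) ≤ span K (range b))
    (hk : k ≤ finrank K (span K (range a))) :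
    LinearIndependent K b ∧ span K (range b) = span K (range a) := by
  have := FiniteDimensional.span_of_finite K (finite_range b)
  have hb : finrank K (span K (range b)) ≤ k := by
    simpa [Set.finrank] using finrank_range_le_card (R := K) b
  have ha := Submodule.finrank_mono hab
  refine ⟨linearIndependent_iff_card_eq_finrank_span.2 ?_,
    (Submodule.eq_of_le_of_finrank_le hab (by omega)).symm⟩
  simp only [Fintype.card_fin, Set.finrank]
  omega

theorem affineIndependent_of_affineSpan_eq_top [FiniteDimensional K V] {p : ι → V} [Fintype ι]
    (hcard : Fintype.card ι = finrank K V + 1) (hp : affineSpan K (range p) = ⊤) :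
    AffineIndependent K p := by
  rw [affineIndependent_iff_finrank_vectorSpan_eq K p hcard, ← direction_affineSpan, hp,
    AffineSubspace.direction_top, finrank_top]

end LinearAlgebra

section Polyhedron

variable {E : Type*} [AddCommGroup E] [Module ℝ E] {κ : Type*} (f : κ → E →ᵃ[ℝ] ℝ)

def polyhedron : Set E := {x | ∀ j, 0 ≤ f j x}

/-- Its nonnegative vectors `z` form the cone over `polyhedron f`. -/
def homogenization : ℝ × E →ₗ[ℝ] κ → ℝ :=
  LinearMap.pi fun j => f j 0 • LinearMap.fst ℝ ℝ E + (f j).linear ∘ₗ LinearMap.snd ℝ ℝ E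

variable {f}

theorem convex_polyhedron : Convex ℝ (polyhedron f) := by
  have : polyhedron f = ⋂ j, f j ⁻¹' Ici 0 := by ext; simp [polyhedron]
  rw [this]
  exact convex_iInter fun j => (convex_Ici 0).affine_preimage (f j)

theorem homogenization_apply (z : ℝ × E) (j : κ) :
    homogenization f z j = z.1 * f j 0 + (f j).linear z.2 := by
  simp [homogenization, mul_comm]

theorem homogenization_zero_prod (w : E) (j : κ) :
    homogenization f (0, w) j = (f j).linear w := by
  rw [homogenization_apply, zero_mul, zero_add]

theorem homogenization_one_prod (x : E) : homogenization f (1, x) = fun j => f j x := by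
  ext j
  rw [homogenization_apply, one_mul, add_comm, ← vadd_eq_add, ← AffineMap.map_vadd, vadd_eq_add,
    add_zero]

theorem affineSpan_eq_top_of_subset_convexHull {ι ι' : Type*} {v : ι → E} {p : ι' → E}
    (hdim : affineSpan ℝ (range v) = ⊤) (hvp : ∀ i, v i ∈ convexHull ℝ (range p)) :
    affineSpan ℝ (range p) = ⊤ :=
  eq_top_iff.2 <| hdim ▸ affineSpan_le.2 <| range_subset_iff.2 fun i =>
    convexHull_subset_affineSpan _ (hvp i)

theorem nontrivial_polyhedron [Nontrivial E] {ι : Type*} {v : ι → E}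
    (hv : ∀ i, v i ∈ polyhedron f) (hdim : affineSpan ℝ (range v) = ⊤) :
    (polyhedron f).Nontrivial :=
  (not_subsingleton_iff.1 fun h => not_subsingleton E
    (AffineSubspace.subsingleton_of_subsingleton_span_eq_top h hdim)).mono (range_subset_iff.2 hv)

theorem exists_factorization_of_subset_convexHull {ι ι' : Type*} [Fintype ι'] {v : ι → E}
    {p : ι' → E} (hp : AffineIndependent ℝ p) (hdim : affineSpan ℝ (range v) = ⊤)
    (hvp : ∀ i, v i ∈ convexHull ℝ (range p)) :
    ∃ c : ι' → ι → ℝ, (∀ l i, 0 ≤ c l i) ∧ ∀ j i, f j (v i) = ∑ l, f j (p l) * c l i := by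
  let B : AffineBasis ι' ℝ E := ⟨p, hp, affineSpan_eq_top_of_subset_convexHull hdim hvp⟩
  refine ⟨fun l i => B.coord l (v i), fun l i => ?_, fun j i => ?_⟩
  · exact (B.convexHull_eq_nonneg_coord ▸ hvp i : v i ∈ {x | ∀ l, 0 ≤ B.coord l x}) l
  · have hcomb : ((1 : ℝ), v i) = ∑ l, B.coord l (v i) • ((1 : ℝ), p l) := by
      ext
      · simp [Prod.fst_sum, B.sum_coord_apply_eq_one]
      · simp only [Prod.snd_sum, Prod.smul_snd]
        exact (B.linear_combination_coord_eq_self (v i)).symm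
    have := congrFun (congrArg (homogenization f) hcomb) j
    simp only [map_sum, map_smul, homogenization_one_prod, Finset.sum_apply, Pi.smul_apply,
      smul_eq_mul] at this
    simpa [mul_comm] using this

theorem card_eq_and_span_eq_range_homogenization [FiniteDimensional ℝ E] {ι : Type*} [Fintype ι]
    {v : ι → E} (hinj : Injective (homogenization f)) (hdim : affineSpan ℝ (range v) = ⊤)
    {k : ℕ} (hk : k ≤ finrank ℝ E + 1) {b : Fin k → κ → ℝ} {c : Fin k → ι → ℝ}
    (hcol : ∀ i, homogenization f (1, v i) = ∑ l, c l i • b l) :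
    k = finrank ℝ E + 1 ∧ LinearIndependent ℝ b ∧
      span ℝ (range b) = LinearMap.range (homogenization f) := by
  have hcols : span ℝ (range fun i => homogenization f (1, v i)) =
      LinearMap.range (homogenization f) := by
    rw [range_comp' (homogenization f), ← Submodule.map_span, span_range_one_prod_eq_top hdim,
      Submodule.map_top]
  have hrank : finrank ℝ (LinearMap.range (homogenization f)) = finrank ℝ E + 1 := by
    rw [LinearMap.finrank_range_of_inj hinj, Module.finrank_prod, finrank_self, add_comm]
  have hab : span ℝ (range fun i => homogenization f (1, v i)) ≤ span ℝ (range b) :=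
    span_le.2 <| range_subset_iff.2 fun i =>
      hcol i ▸ sum_mem fun l _ => smul_mem _ _ (subset_span ⟨l, rfl⟩)
  obtain ⟨hli, hspan⟩ := linearIndependent_and_span_eq_of_le hab (hcols ▸ hrank ▸ hk)
  rw [hcols] at hspan
  refine ⟨?_, hli, hspan⟩
  have := linearIndependent_iff_card_eq_finrank_span.1 hli
  rwa [Fintype.card_fin, Set.finrank, hspan, hrank] at this

end Polyhedron

section BoundedPolyhedron

variable {E : Type*} [NormedAddCommGroup E] [NormedSpace ℝ E] {κ : Type*}
  {f : κ → E →ᵃ[ℝ] ℝ}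

theorem eq_zero_of_linear_nonneg (hQ : IsBounded (polyhedron f)) {q : E} (hq : q ∈ polyhedron f)
    {w : E} (hw : ∀ j, 0 ≤ (f j).linear w) : w = 0 := by
  obtain ⟨C, hC⟩ := hQ.exists_norm_le
  have hray : ∀ s : ℝ, 0 ≤ s → s * ‖w‖ ≤ C + ‖q‖ := by
    intro s hs
    have hmem : q + s • w ∈ polyhedron f := fun j => by
      rw [add_comm, ← vadd_eq_add, AffineMap.map_vadd, map_smul, vadd_eq_add, smul_eq_mul]
      exact add_nonneg (mul_nonneg hs (hw j)) (hq j)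
    calc s * ‖w‖ = ‖(q + s • w) - q‖ := by simp [norm_smul, abs_of_nonneg hs]
      _ ≤ C + ‖q‖ := (norm_sub_le _ _).trans (add_le_add_left (hC _ hmem) _)
  by_contra hw0
  have hpos : 0 < ‖w‖ := norm_pos_iff.2 hw0
  have := hray ((C + ‖q‖ + 1) / ‖w‖) (by have := (norm_nonneg _).trans (hC q hq); positivity)
  rw [div_mul_cancel₀ _ hpos.ne'] at this
  linarith

/-- `(0, y - t q)` is `z - t (1, q)`, a nonnegative combination of points of the cone, hence a
recession direction of the polyhedron. -/
theorem snd_eq_smul_of_homogenization_nonneg (hQ : IsBounded (polyhedron f)) {q : E}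
    (hq : q ∈ polyhedron f) {z : ℝ × E} (hz : 0 ≤ homogenization f z) (ht : z.1 ≤ 0) :
    z.2 = z.1 • q := by
  rw [← sub_eq_zero]
  refine eq_zero_of_linear_nonneg hQ hq fun j => ?_
  have hdecomp : ((0 : ℝ), z.2 - z.1 • q) = z - z.1 • (1, q) := by ext <;> simp
  rw [← homogenization_zero_prod, hdecomp, map_sub, map_smul, homogenization_one_prod]
  have := mul_nonneg (neg_nonneg.2 ht) (hq j)
  simp only [Pi.sub_apply, Pi.smul_apply, smul_eq_mul]
  linarith [show 0 ≤ homogenization f z j from hz j]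

theorem eq_zero_of_homogenization_nonneg (hQ : IsBounded (polyhedron f))
    (hQ' : (polyhedron f).Nontrivial) {z : ℝ × E} (hz : 0 ≤ homogenization f z) (ht : z.1 ≤ 0) :
    z = 0 := by
  obtain ⟨q₁, hq₁, q₂, hq₂, hne⟩ := hQ'
  have h := (snd_eq_smul_of_homogenization_nonneg hQ hq₁ hz ht).symm.trans
    (snd_eq_smul_of_homogenization_nonneg hQ hq₂ hz ht)
  have ht0 : z.1 = 0 := by
    rw [← sub_eq_zero, ← smul_sub] at h
    exact (smul_eq_zero.1 h).resolve_right (sub_ne_zero.2 hne)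
  ext
  · exact ht0
  · simp [snd_eq_smul_of_homogenization_nonneg hQ hq₁ hz ht, ht0]

theorem homogenization_injective (hQ : IsBounded (polyhedron f))
    (hQ' : (polyhedron f).Nontrivial) : Injective (homogenization f) := by
  refine (injective_iff_map_eq_zero _).2 fun z hz => ?_
  rcases le_total z.1 0 with ht | ht
  · exact eq_zero_of_homogenization_nonneg hQ hQ' hz.ge ht
  · rw [← neg_eq_zero]
    exact eq_zero_of_homogenization_nonneg hQ hQ' (by simp [hz]) (by simpa using ht)

theorem fst_pos_of_homogenization_nonneg (hQ : IsBounded (polyhedron f))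
    (hQ' : (polyhedron f).Nontrivial) {z : ℝ × E} (hz : 0 ≤ homogenization f z) (hz0 : z ≠ 0) :
    0 < z.1 :=
  lt_of_not_ge fun ht => hz0 (eq_zero_of_homogenization_nonneg hQ hQ' hz ht)

variable [FiniteDimensional ℝ E] [Nontrivial E] {ι : Type*} [Fintype ι] {v : ι → E}

theorem exists_simplex_of_factorization (hQ : IsBounded (polyhedron f))
    (hv : ∀ i, v i ∈ polyhedron f) (hdim : affineSpan ℝ (range v) = ⊤) {k : ℕ}
    (hk : k ≤ finrank ℝ E + 1) {b : Fin k → κ → ℝ} {c : Fin k → ι → ℝ} (hb : ∀ l, 0 ≤ b l)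
    (hc : ∀ l i, 0 ≤ c l i) (hA : ∀ j i, f j (v i) = ∑ l, b l j * c l i) :
    k = finrank ℝ E + 1 ∧ ∃ (t : Fin k → ℝ) (p : Fin k → E),
      (∀ l, 0 < t l ∧ b l = t l • fun j => f j (p l)) ∧ ∀ i, v i ∈ convexHull ℝ (range p) := by
  have hQ' := nontrivial_polyhedron hv hdim
  have hinj := homogenization_injective hQ hQ'
  have hcol : ∀ i, homogenization f (1, v i) = ∑ l, c l i • b l := fun i => by
    ext j
    simp [homogenization_one_prod, Finset.sum_apply, hA, mul_comm]
  obtain ⟨hk', hli, hspan⟩ := card_eq_and_span_eq_range_homogenization hinj hdim hk hcol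
  refine ⟨hk', ?_⟩
  have hz : ∀ l, ∃ z, homogenization f z = b l := fun l =>
    LinearMap.mem_range.1 (hspan ▸ subset_span ⟨l, rfl⟩)
  choose z hz using hz
  have ht : ∀ l, 0 < (z l).1 := fun l =>
    fst_pos_of_homogenization_nonneg hQ hQ' (hz l ▸ hb l)
      (by rintro h; exact hli.ne_zero l (by rw [← hz l, h, map_zero]))
  have hz_smul : ∀ l, z l = (z l).1 • ((1 : ℝ), (z l).1⁻¹ • (z l).2) := fun l => by
    ext
    · simp
    · simp [smul_inv_smul₀ (ht l).ne']
  refine ⟨fun l => (z l).1, fun l => (z l).1⁻¹ • (z l).2, fun l => ⟨ht l, ?_⟩, fun i => ?_⟩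
  · rw [← hz l, ← homogenization_one_prod, ← map_smul, ← hz_smul l]
  have hcomb : ((1 : ℝ), v i) = ∑ l, c l i • z l := by
    apply hinj
    simp only [hcol, map_sum, map_smul, hz]
  refine mem_convexHull_of_exists_fintype (fun l => c l i * (z l).1) _
    (fun l => mul_nonneg (hc l i) (ht l).le) ?_ (fun l => mem_range_self l) ?_
  · simpa [Prod.fst_sum] using (congrArg Prod.fst hcomb).symm
  · have hsnd : v i = ∑ l, c l i • (z l).2 := by
      simpa [Prod.snd_sum] using congrArg Prod.snd hcomb
    rw [hsnd]
    refine sum_congr rfl fun l _ => ?_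
    rw [smul_smul, mul_assoc, mul_inv_cancel₀ (ht l).ne', mul_one]

end BoundedPolyhedron

section Coordinates

variable {d n : ℕ} {f : Fin n → (Fin d → ℝ) →ᵃ[ℝ] ℝ} (S : Subfield ℝ)

variable (f) in
def homogenizationCoord : (Fin (d + 1) → ℝ) →ₗ[ℝ] Fin n → ℝ :=
  homogenization f ∘ₗ (Fin.consLinearEquiv ℝ fun _ => ℝ).symm.toLinearMap

theorem homogenizationCoord_cons (t : ℝ) (y : Fin d → ℝ) :
    homogenizationCoord f (Fin.cons t y) = homogenization f (t, y) := by
  simp [homogenizationCoord]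

theorem homogenizationCoord_single_mem
    (hfS : ∀ j, f j 0 ∈ S ∧ ∀ l, (f j).linear (Pi.single l 1) ∈ S) (i : Fin (d + 1)) (j : Fin n) :
    homogenizationCoord f (Pi.single i 1) j ∈ S := by
  cases i using Fin.cases with
  | zero =>
    have : (Pi.single 0 1 : Fin (d + 1) → ℝ) = Fin.cons 1 0 := by
      ext i; cases i using Fin.cases <;> simp
    simpa [this, homogenizationCoord_cons, homogenization_apply] using (hfS j).1
  | succ r =>
    have : (Pi.single r.succ 1 : Fin (d + 1) → ℝ) = Fin.cons 0 (Pi.single r 1) := by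
      ext i; cases i using Fin.cases <;> simp [Pi.single_apply]
    simpa [this, homogenizationCoord_cons, homogenization_apply] using (hfS j).2 r

theorem apply_mem_of_coeff_mem (hfS : ∀ j, f j 0 ∈ S ∧ ∀ l, (f j).linear (Pi.single l 1) ∈ S)
    {x : Fin d → ℝ} (hx : ∀ l, x l ∈ S) (j : Fin n) : f j x ∈ S := by
  have hfx : f j x = (LinearMap.toMatrix' (homogenizationCoord f) *ᵥ Fin.cons 1 x) j := by
    rw [LinearMap.toMatrix'_mulVec, homogenizationCoord_cons, homogenization_one_prod]
  rw [hfx]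
  refine S.mulVec_mem (fun j i => ?_) (Fin.cases S.one_mem hx) j
  rw [LinearMap.toMatrix'_apply]
  exact homogenizationCoord_single_mem S hfS i j

/-- `(t, t p)` is the unique preimage of `b` under the homogenization, which is defined over `S`. -/
theorem mem_of_slack_eq_smul (hinj : Injective (homogenization f))
    (hfS : ∀ j, f j 0 ∈ S ∧ ∀ l, (f j).linear (Pi.single l 1) ∈ S) {b : Fin n → ℝ}
    (hb : ∀ j, b j ∈ S) {t : ℝ} (ht : t ≠ 0) {p : Fin d → ℝ} (hp : b = t • fun j => f j p)
    (r : Fin d) : p r ∈ S := by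
  have hbt : homogenizationCoord f (Fin.cons t (t • p)) = b := by
    rw [homogenizationCoord_cons, hp, ← homogenization_one_prod, ← map_smul]
    simp
  have hmem := S.apply_mem_of_injective (L := homogenizationCoord f)
    (hinj.comp (Fin.consLinearEquiv ℝ fun _ => ℝ).symm.injective)
    (homogenizationCoord_single_mem S hfS) (x := Fin.cons t (t • p)) (hbt ▸ hb)
  have hpr : p r = t⁻¹ * (t * p r) := by field_simp
  rw [hpr]
  exact S.mul_mem (S.inv_mem (by simpa using hmem 0)) (by simpa using hmem r.succ)

end Coordinates

section NonnegRank

variable {m n : ℕ} (F : Subfield ℝ) (A : Matrix (Fin m) (Fin n) ℝ)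

def IsNonnegFactorization {k : ℕ} (b : Fin k → Fin m → ℝ) (c : Fin k → Fin n → ℝ) : Prop :=
  (∀ l i, 0 ≤ b l i ∧ b l i ∈ F) ∧ (∀ l j, 0 ≤ c l j ∧ c l j ∈ F) ∧
    A = ∑ l, vecMulVec (b l) (c l)

variable {F A}

theorem nonnegRank_le {k : ℕ} {b : Fin k → Fin m → ℝ} {c : Fin k → Fin n → ℝ}
    (h : IsNonnegFactorization F A b c) : nonnegRank F A ≤ k :=
  Nat.sInf_le ⟨b, c, h⟩

theorem exists_isNonnegFactorization_nonnegRank (hA : ∀ i j, 0 ≤ A i j ∧ A i j ∈ F) :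
    ∃ b c, IsNonnegFactorization F A (k := nonnegRank F A) b c := by
  refine Nat.sInf_mem (s := {k | ∃ b c, IsNonnegFactorization F A (k := k) b c})
    ⟨m, fun l => Pi.single l 1, fun l => A l, fun l i => ?_, fun l j => hA l j,
      eq_sum_vecMulVec_iff.2 fun i j => by simp [Pi.single_apply]⟩
  by_cases h : i = l <;> simp [h, F.one_mem, F.zero_mem]

end NonnegRank

theorem exists_simplex_of_isNonnegFactorization {d m n : ℕ} [NeZero d] (S : Subfield ℝ)
    {v : Fin m → Fin d → ℝ} {f : Fin n → (Fin d → ℝ) →ᵃ[ℝ] ℝ} (hQ : IsBounded (polyhedron f))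
    (hv : ∀ i, v i ∈ polyhedron f) (hdim : affineSpan ℝ (range v) = ⊤)
    (hfS : ∀ j, f j 0 ∈ S ∧ ∀ l, (f j).linear (Pi.single l 1) ∈ S)
    {A : Matrix (Fin n) (Fin m) ℝ} (hA : ∀ j i, A j i = f j (v i)) {k : ℕ} (hk : k ≤ d + 1)
    {b : Fin k → Fin n → ℝ} {c : Fin k → Fin m → ℝ} (hbc : IsNonnegFactorization S A b c) :
    k = d + 1 ∧ ∃ p : Fin (d + 1) → Fin d → ℝ, AffineIndependent ℝ p ∧
      convexHull ℝ (range v) ⊆ convexHull ℝ (range p) ∧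
      convexHull ℝ (range p) ⊆ polyhedron f ∧ ∀ l r, p l r ∈ S := by
  obtain ⟨hb, hc, hAbc⟩ := hbc
  rw [eq_sum_vecMulVec_iff] at hAbc
  obtain ⟨hk', t, p, htp, hvp⟩ := exists_simplex_of_factorization hQ hv hdim
    (by rwa [finrank_fin_fun]) (fun l j => (hb l j).1) (fun l i => (hc l i).1)
    (fun j i => hA j i ▸ hAbc j i)
  rw [finrank_fin_fun] at hk'
  subst hk'
  have hpQ : ∀ l, p l ∈ polyhedron f := fun l j => by
    have hbj := congrFun (htp l).2 j
    simp only [Pi.smul_apply, smul_eq_mul] at hbj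
    exact nonneg_of_mul_nonneg_right (hbj ▸ (hb l j).1) (htp l).1
  refine ⟨rfl, p, affineIndependent_of_affineSpan_eq_top (by simp)
      (affineSpan_eq_top_of_subset_convexHull hdim hvp),
    convexHull_min (range_subset_iff.2 hvp) (convex_convexHull ℝ _),
    convexHull_min (range_subset_iff.2 hpQ) convex_polyhedron, fun l r => ?_⟩
  exact mem_of_slack_eq_smul S (homogenization_injective hQ (nontrivial_polyhedron hv hdim)) hfS
    (fun j => (hb l j).2) (htp l).1.ne' (htp l).2 r

theorem nonnegRank_top_le_of_simplex {d m n k : ℕ} {v : Fin m → Fin d → ℝ}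
    {f : Fin n → (Fin d → ℝ) →ᵃ[ℝ] ℝ} {A : Matrix (Fin n) (Fin m) ℝ}
    (hA : ∀ j i, A j i = f j (v i)) (hdim : affineSpan ℝ (range v) = ⊤) {p : Fin k → Fin d → ℝ}
    (hp : AffineIndependent ℝ p) (hvp : convexHull ℝ (range v) ⊆ convexHull ℝ (range p))
    (hpQ : convexHull ℝ (range p) ⊆ polyhedron f) : nonnegRank ⊤ A ≤ k := by
  obtain ⟨c, hc, hAc⟩ := exists_factorization_of_subset_convexHull (f := f) hp hdim
    fun i => hvp (subset_convexHull ℝ _ (mem_range_self i))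
  exact nonnegRank_le (b := fun l j => f j (p l)) (c := c)
    ⟨fun l j => ⟨hpQ (subset_convexHull ℝ _ (mem_range_self l)) j, Subfield.mem_top _⟩,
      fun l i => ⟨hc l i, Subfield.mem_top _⟩,
      eq_sum_vecMulVec_iff.2 fun j i => (hA j i).trans (hAc j i)⟩

/-- If `P = conv{v_1,...,v_m}` in `R^d` is full-dimensional with vertices over `F`,
contained in the bounded polyhedron `Q = {x | forall j, f_j x >= 0}` whose affine inequalities
have coefficients in `F`, if some simplex (with `k = d+1` affinely independent vertices) is
sandwiched between `P` and `Q`, while every such simplex has a vertex with a coordinate outside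
`F`, then the slack matrix `A` satisfies `rank_+(A, F) > k = rank_+(A, R)`. -/
theorem stmt5 {d m n : ℕ} (F : Subfield ℝ) (v : Fin m → (Fin d → ℝ))
    (f : Fin n → ((Fin d → ℝ) →ᵃ[ℝ] ℝ))
    (Q : Set (Fin d → ℝ)) (hQ : Q = {x | ∀ j, 0 ≤ f j x})
    (hdim : affineSpan ℝ (Set.range v) = ⊤)
    (hPQ : ∀ i, v i ∈ Q) (hbdd : Bornology.IsBounded Q)
    (hvF : ∀ i l, v i l ∈ F)
    (hfF : ∀ j, (f j) 0 ∈ F ∧ ∀ l, (f j).linear (Pi.single l 1) ∈ F)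
    (hexists : ∃ dpts : Fin (d + 1) → (Fin d → ℝ), AffineIndependent ℝ dpts ∧
      convexHull ℝ (Set.range v) ⊆ convexHull ℝ (Set.range dpts) ∧
      convexHull ℝ (Set.range dpts) ⊆ Q)
    (hnotF : ∀ dpts : Fin (d + 1) → (Fin d → ℝ), AffineIndependent ℝ dpts →
      convexHull ℝ (Set.range v) ⊆ convexHull ℝ (Set.range dpts) →
      convexHull ℝ (Set.range dpts) ⊆ Q → ∃ l i, dpts l i ∉ F)
    (A : Matrix (Fin n) (Fin m) ℝ) (hA : ∀ j i, A j i = f j (v i)) :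
    nonnegRank F A > d + 1 ∧ nonnegRank ⊤ A = d + 1 := by
  subst hQ
  obtain ⟨p₀, hp₀, hvp₀, hp₀Q⟩ := hexists
  have : NeZero d := ⟨by rintro rfl; obtain ⟨-, r, -⟩ := hnotF p₀ hp₀ hvp₀ hp₀Q; exact r.elim0⟩
  have hAF : ∀ j i, 0 ≤ A j i ∧ A j i ∈ F := fun j i =>
    hA j i ▸ ⟨hPQ i j, apply_mem_of_coeff_mem F hfF (hvF i) j⟩
  have hsimplex := fun S => exists_simplex_of_isNonnegFactorization S hbdd hPQ hdim (A := A)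
  have hle := nonnegRank_top_le_of_simplex hA hdim hp₀ hvp₀ hp₀Q
  refine ⟨lt_of_not_ge fun h => ?_, ?_⟩
  · obtain ⟨b, c, hbc⟩ := exists_isNonnegFactorization_nonnegRank hAF
    obtain ⟨-, p, hp, hvp, hpQ, hpF⟩ := hsimplex F hfF hA h hbc
    obtain ⟨l, r, hr⟩ := hnotF p hp hvp hpQ
    exact hr (hpF l r)
  · obtain ⟨b, c, hbc⟩ := exists_isNonnegFactorization_nonnegRank (F := ⊤)
      fun j i => ⟨(hAF j i).1, Subfield.mem_top _⟩
    exact (hsimplex ⊤ (fun _ => ⟨Subfield.mem_top _, fun _ => Subfield.mem_top _⟩) hA hle hbc).1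
end

section
/- Let Δ = conv{d₁,…,d_k} ⊆ ℝ^{k-1} be a simplex (d₁,…,d_k affinely independent). Let P be a polytope each of whose vertices is within distance ε of a distinct vertex of Δ and which contains points within ε of each dᵢ, and let Q be any polytope with Δ ⊆ Q whose vertices converge to points of Δ. Then as ε → 0, the Hausdorff distance between Δ and any simplex Δ' with k vertices satisfying P ⊆ Δ' ⊆ Q tends to 0. -/
open Set

/-- Stability of the sandwiched simplex: let `Δ = conv{d₁,…,d_k}` be a simplex in `ℝ^{k-1}`
(`k = d+1`). For every `δ > 0` there is `ε > 0` such that whenever `P = conv{p₁,…,p_k}` has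
each vertex within `ε` of the corresponding vertex of `Δ`, and `Q = conv{q₁,…,q_l}` contains
`Δ` with each vertex within `ε` of a point of `Δ`, any simplex `Δ' = conv{d'₁,…,d'_k}` with
`P ⊆ Δ' ⊆ Q` has Hausdorff distance less than `δ` from `Δ`. -/
theorem stmt13 {d : ℕ} (dpts : Fin (d + 1) → EuclideanSpace ℝ (Fin d))
    (hind : AffineIndependent ℝ dpts) :
    ∀ δ > 0, ∃ ε > 0, ∀ (l : ℕ) (p : Fin (d + 1) → EuclideanSpace ℝ (Fin d))
      (q : Fin l → EuclideanSpace ℝ (Fin d)) (d' : Fin (d + 1) → EuclideanSpace ℝ (Fin d)),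
      (∀ i, dist (p i) (dpts i) < ε) →
      (∀ j, ∃ y ∈ convexHull ℝ (range dpts), dist (q j) y < ε) →
      convexHull ℝ (range dpts) ⊆ convexHull ℝ (range q) →
      convexHull ℝ (range p) ⊆ convexHull ℝ (range d') →
      convexHull ℝ (range d') ⊆ convexHull ℝ (range q) →
      Metric.hausdorffDist (convexHull ℝ (range d')) (convexHull ℝ (range dpts)) < δ := by
  intro δ hδ
  refine ⟨δ / 2, by positivity, ?_⟩
  intro l p q d' hp hq hΔQ hPΔ' hΔ'Q
  have hε : (0 : ℝ) ≤ δ / 2 := by positivity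
  -- Δ' ⊆ Q ⊆ thickening (δ/2) Δ
  have h1 : convexHull ℝ (range d') ⊆
      Metric.thickening (δ / 2) (convexHull ℝ (range dpts)) := by
    refine hΔ'Q.trans (convexHull_min ?_ ?_)
    · rintro x ⟨j, rfl⟩
      obtain ⟨y, hy, hdy⟩ := hq j
      exact Metric.mem_thickening_iff.2 ⟨y, hy, hdy⟩
    · exact (convex_convexHull ℝ _).thickening _
  -- Δ ⊆ thickening (δ/2) Δ'
  have h2 : convexHull ℝ (range dpts) ⊆
      Metric.thickening (δ / 2) (convexHull ℝ (range d')) := by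
    refine convexHull_min ?_ ((convex_convexHull ℝ _).thickening _)
    rintro x ⟨i, rfl⟩
    refine Metric.mem_thickening_iff.2 ⟨p i, hPΔ' (subset_convexHull ℝ _ ⟨i, rfl⟩), ?_⟩
    rw [dist_comm]; exact hp i
  have hle : Metric.hausdorffDist (convexHull ℝ (range d'))
      (convexHull ℝ (range dpts)) ≤ δ / 2 := by
    refine Metric.hausdorffDist_le_of_infDist hε ?_ ?_
    · intro x hx
      obtain ⟨y, hy, hxy⟩ := Metric.mem_thickening_iff.1 (h1 hx)
      exact le_trans (Metric.infDist_le_dist_of_mem hy) hxy.le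
    · intro x hx
      obtain ⟨y, hy, hxy⟩ := Metric.mem_thickening_iff.1 (h2 hx)
      exact le_trans (Metric.infDist_le_dist_of_mem hy) hxy.le
  linarith
end
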